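/- Let ρ be a unitary representation of S_∞ on a complex Hilbert space V. Then ρ admits a continuous extension to the full symmetric group Perm(ℕ) if and only if ⋃_{α ∈ ℕ} V[α] is dense in V. Here a continuous extension means a group homomorphism ρ̄ from Perm(ℕ) to the unitary automorphisms of V such that ρ̄(g) = ρ(g) for all g ∈ S_∞ and such that for every v ∈ V and every ε > 0 there exists α ∈ ℕ with ‖ρ̄(h)v − v‖ < ε for every h ∈ Perm(ℕ) fixing each of the points 0,1,…,α−1. -/

import Mathlib

/-!
If `⋃ α, V[α]` is dense, the extension is forced: at `g ∈ Perm(ℕ)` it must act on `V[α]` as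
`ρ h` for any finitely supported `h` agreeing with `g` on `0, …, α - 1`. This is well defined,
isometric and multiplicative on the dense subspace `⋃ α, V[α]`, hence extends by continuity to a
representation of `Perm(ℕ)`; it is continuous because every vector of `V[α]` is fixed by the
permutations fixing `0, …, α - 1`.

Conversely, if `ρ̄` is continuous and moves `v` by at most `ε` on the permutations fixing
`0, …, α - 1`, the closed convex hull of the corresponding `ρ`-orbit of `v` lies in the `ε`-ball
around `v`. Its point of minimal norm is unique (the norm of a Hilbert space is strictly convex),
so it is fixed by that stabiliser, i.e. it lies in `V[α]`.
-/

/-- The subgroup of finitely supported permutations of `ℕ`. -/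
def Sinf : Subgroup (Equiv.Perm ℕ) where
  carrier := {g | {x | g x ≠ x}.Finite}
  one_mem' := by
    show Set.Finite {x | (1 : Equiv.Perm ℕ) x ≠ x}
    convert Set.finite_empty
    ext x; simp
  mul_mem' {f g} hf hg := by
    apply Set.Finite.subset (hf.union hg)
    intro x hx
    simp only [Set.mem_setOf_eq, Set.mem_union, Equiv.Perm.mul_apply] at hx ⊢
    by_contra hc
    push_neg at hc
    rw [hc.2] at hx
    exact hx hc.1
  inv_mem' {g} hg := by
    apply Set.Finite.subset hg
    intro x hx
    simp only [Set.mem_setOf_eq] at hx ⊢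
    intro h
    apply hx
    apply g.injective
    simp [h]

section

variable {V : Type*} [NormedAddCommGroup V] [InnerProductSpace ℂ V] [CompleteSpace V]

/-- `V[α]`: the closed subspace of vectors fixed by `ρ(h)` for every finitely supported
permutation `h` fixing the points `0, 1, …, α-1`. -/
def fixedVectorsS (ρ : ↥Sinf →* (V ≃ₗᵢ[ℂ] V)) (α : ℕ) : Set V :=
  {v | ∀ h : ↥Sinf, (∀ i < α, (h : Equiv.Perm ℕ) i = i) → ρ h v = v}

/-- `ρ̄ : Perm(ℕ) → U(V)` is a continuous extension of `ρ : S_∞ → U(V)`: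
it extends `ρ` and is continuous in the topology of pointwise convergence, i.e. for each
`v ∈ V` and `ε > 0` there is `α` with `‖ρ̄(h)v - v‖ < ε` for every `h` fixing `0,…,α-1`. -/
def IsContinuousExtension (ρ : ↥Sinf →* (V ≃ₗᵢ[ℂ] V))
    (ρb : Equiv.Perm ℕ →* (V ≃ₗᵢ[ℂ] V)) : Prop :=
  (∀ g : ↥Sinf, ρb (g : Equiv.Perm ℕ) = ρ g) ∧
    ∀ v : V, ∀ ε : ℝ, 0 < ε → ∃ α : ℕ, ∀ h : Equiv.Perm ℕ,
      (∀ i < α, h i = i) → ‖ρb h v - v‖ < ε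

end

open Set

section LinearIsometryEquiv

variable {𝕜 E : Type*} [NormedField 𝕜] [NormedAddCommGroup E] [NormedSpace 𝕜 E]

noncomputable def MonoidHom.toLinearIsometryEquiv {G : Type*} [Group G] (φ : G →* (E →L[𝕜] E))
    (hφ : ∀ g x, ‖φ g x‖ = ‖x‖) : G →* (E ≃ₗᵢ[𝕜] E) where
  toFun g := .ofSurjective ⟨(φ g).toLinearMap, hφ g⟩ fun x => ⟨φ g⁻¹ x, by
    change (φ g * φ g⁻¹) x = x
    rw [← map_mul, mul_inv_cancel, map_one, one_apply_eq_self]⟩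
  map_one' := LinearIsometryEquiv.ext fun x => by
    change φ 1 x = x
    rw [map_one, one_apply_eq_self]
  map_mul' g h := LinearIsometryEquiv.ext fun x => by
    change φ (g * h) x = φ g (φ h x)
    rw [map_mul, mul_apply_eq_comp]

end LinearIsometryEquiv

theorem mapsTo_closedConvexHull {𝕜 E : Type*} [Semiring 𝕜] [PartialOrder 𝕜] [AddCommGroup E]
    [Module 𝕜 E] [TopologicalSpace E] {f : E → E} (hf : IsLinearMap 𝕜 f) (hfc : Continuous f)
    {s : Set E} (hs : MapsTo f s s) : MapsTo f (closedConvexHull 𝕜 s) (closedConvexHull 𝕜 s) :=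
  closedConvexHull_min (fun _ hx => subset_closedConvexHull (hs hx))
    (convex_closedConvexHull.is_linear_preimage hf) (isClosed_closedConvexHull.preimage hfc)

theorem Convex.exists_mem_forall_norm_le_imp_eq {F : Type*} [NormedAddCommGroup F]
    [InnerProductSpace ℝ F] [CompleteSpace F] {K : Set F} (hconv : Convex ℝ K)
    (hne : K.Nonempty) (hK : IsClosed K) : ∃ m ∈ K, ∀ x ∈ K, ‖x‖ ≤ ‖m‖ → x = m := by
  obtain ⟨m, hmK, hm⟩ := exists_norm_eq_iInf_of_complete_convex hne hK.isComplete hconv 0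
  have hmin : ∀ x ∈ K, ‖m‖ ≤ ‖x‖ := fun x hx => by
    have := ciInf_le (f := fun w : K => ‖0 - (w : F)‖)
      ⟨0, forall_mem_range.2 fun _ => norm_nonneg _⟩ ⟨x, hx⟩
    rwa [← hm, zero_sub, zero_sub, norm_neg, norm_neg] at this
  refine ⟨m, hmK, fun x hx hxm => by_contra fun hne => ?_⟩
  have heq : ‖x‖ = ‖m‖ := hxm.antisymm (hmin x hx)
  have hmid : (1 / 2 : ℝ) • (x + m) ∈ K := by
    rw [smul_add]; exact hconv hx hmK (by norm_num) (by norm_num) (by norm_num)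
  exact ((norm_midpoint_lt_iff heq).2 hne).not_ge (heq ▸ hmin _ hmid)

theorem swap_mem_Sinf (a b : ℕ) : Equiv.swap a b ∈ Sinf :=
  (Set.toFinite {a, b}).subset fun x hx => by
    by_contra hab
    simp only [mem_insert_iff, mem_singleton_iff, not_or] at hab
    exact hx (Equiv.swap_apply_of_ne_of_ne hab.1 hab.2)

theorem exists_Sinf_eqOn (g : Equiv.Perm ℕ) (α : ℕ) :
    ∃ h : Sinf, ∀ i < α, (h : Equiv.Perm ℕ) i = g i := by
  induction α with
  | zero => exact ⟨1, fun i hi => absurd hi i.not_lt_zero⟩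
  | succ α ih =>
    obtain ⟨⟨h, hS⟩, hh⟩ := ih
    refine ⟨⟨Equiv.swap (h α) (g α), swap_mem_Sinf _ _⟩ * ⟨h, hS⟩, fun i hi => ?_⟩
    change Equiv.swap (h α) (g α) (h i) = g i
    rcases Nat.lt_succ_iff_lt_or_eq.1 hi with hi | rfl
    · rw [hh i hi]
      refine Equiv.swap_apply_of_ne_of_ne (fun he => hi.ne ?_) (fun he => hi.ne (g.injective he))
      exact h.injective ((hh i hi).trans he)
    · exact Equiv.swap_apply_left _ _

section FixedVectors

variable {V : Type*} [NormedAddCommGroup V] [InnerProductSpace ℂ V] {ρ : Sinf →* (V ≃ₗᵢ[ℂ] V)}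

theorem fixedVectorsS_mono : Monotone (fixedVectorsS ρ) :=
  fun _ _ hαβ _ hv h hh => hv h fun i hi => hh i (hi.trans_le hαβ)

theorem apply_eq_of_mem_fixedVectorsS {α : ℕ} {v : V} (hv : v ∈ fixedVectorsS ρ α)
    {h₁ h₂ : Sinf} (heq : ∀ i < α, (h₁ : Equiv.Perm ℕ) i = (h₂ : Equiv.Perm ℕ) i) :
    ρ h₁ v = ρ h₂ v := by
  have hfix : ρ (h₂⁻¹ * h₁) v = v := hv _ fun i hi => by
    change (h₂ : Equiv.Perm ℕ)⁻¹ ((h₁ : Equiv.Perm ℕ) i) = i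
    rw [heq i hi]; exact Equiv.symm_apply_apply _ _
  rw [← mul_inv_cancel_left h₂ h₁, map_mul, LinearIsometryEquiv.coe_mul, Function.comp_apply,
    hfix]

theorem apply_mem_fixedVectorsS {α β : ℕ} {v : V} (hv : v ∈ fixedVectorsS ρ α) {h : Sinf}
    (hβ : ∀ i < α, (h : Equiv.Perm ℕ) i < β) : ρ h v ∈ fixedVectorsS ρ β := fun k hk => by
  have hfix : ρ (h⁻¹ * k * h) v = v := hv _ fun i hi => by
    change (h : Equiv.Perm ℕ)⁻¹ ((k : Equiv.Perm ℕ) ((h : Equiv.Perm ℕ) i)) = i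
    rw [hk _ (hβ i hi)]; exact Equiv.symm_apply_apply _ _
  calc ρ k (ρ h v) = ρ (h * (h⁻¹ * k * h)) v := by simp [mul_assoc]
    _ = ρ h v := by rw [map_mul, LinearIsometryEquiv.coe_mul, Function.comp_apply, hfix]

end FixedVectors

section Extension

variable {V : Type*} [NormedAddCommGroup V] [InnerProductSpace ℂ V] (ρ : Sinf →* (V ≃ₗᵢ[ℂ] V))

def fixedSubmodule (α : ℕ) : Submodule ℂ V where
  carrier := fixedVectorsS ρ α
  add_mem' hu hw h hh := by rw [map_add, hu h hh, hw h hh]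
  zero_mem' h _ := map_zero (ρ h)
  smul_mem' c _ hu h hh := by rw [map_smul, hu h hh]

def fixedVectorsUnion : Submodule ℂ V := ⨆ α, fixedSubmodule ρ α

theorem coe_fixedVectorsUnion : (fixedVectorsUnion ρ : Set V) = ⋃ α, fixedVectorsS ρ α :=
  Submodule.coe_iSup_of_directed _ (Monotone.directed_le fun _ _ hαβ => fixedVectorsS_mono hαβ)

open Classical in
-- The value `0` off `⋃ α, V[α]` is junk.
noncomputable def extendOnFixed (g : Equiv.Perm ℕ) (v : V) : V :=
  if hv : ∃ α, v ∈ fixedVectorsS ρ α then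
    ρ (exists_Sinf_eqOn g (Nat.find hv)).choose v
  else 0

variable {ρ}

open Classical in
theorem extendOnFixed_eq {g : Equiv.Perm ℕ} {α : ℕ} {v : V} (hv : v ∈ fixedVectorsS ρ α)
    {h : Sinf} (hh : ∀ i < α, (h : Equiv.Perm ℕ) i = g i) : extendOnFixed ρ g v = ρ h v := by
  have hex : ∃ α, v ∈ fixedVectorsS ρ α := ⟨α, hv⟩
  rw [extendOnFixed, dif_pos hex]
  refine apply_eq_of_mem_fixedVectorsS (Nat.find_spec hex) fun i hi => ?_
  rw [(exists_Sinf_eqOn g _).choose_spec i hi, hh i (hi.trans_le (Nat.find_min' hex hv))]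

theorem mem_fixedVectorsUnion {v : V} : v ∈ fixedVectorsUnion ρ ↔ ∃ α, v ∈ fixedVectorsS ρ α := by
  rw [← SetLike.mem_coe, coe_fixedVectorsUnion, mem_iUnion]

theorem exists_mem_fixedVectorsS_of_mem_fixedVectorsUnion {u w : V}
    (hu : u ∈ fixedVectorsUnion ρ) (hw : w ∈ fixedVectorsUnion ρ) :
    ∃ α, u ∈ fixedVectorsS ρ α ∧ w ∈ fixedVectorsS ρ α := by
  obtain ⟨⟨α, hu⟩, ⟨β, hw⟩⟩ := And.intro (mem_fixedVectorsUnion.1 hu) (mem_fixedVectorsUnion.1 hw)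
  exact ⟨max α β, fixedVectorsS_mono (le_max_left α β) hu,
    fixedVectorsS_mono (le_max_right α β) hw⟩

variable (ρ) in
noncomputable def extendOnFixedₗᵢ (g : Equiv.Perm ℕ) : fixedVectorsUnion ρ →ₗᵢ[ℂ] V where
  toFun u := extendOnFixed ρ g u
  map_add' u w := by
    obtain ⟨α, hu, hw⟩ := exists_mem_fixedVectorsS_of_mem_fixedVectorsUnion u.2 w.2
    obtain ⟨h, hh⟩ := exists_Sinf_eqOn g α
    simp only [Submodule.coe_add]
    rw [extendOnFixed_eq ((fixedSubmodule ρ α).add_mem hu hw) hh, extendOnFixed_eq hu hh,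
      extendOnFixed_eq hw hh, map_add]
  map_smul' c u := by
    obtain ⟨α, hu⟩ := mem_fixedVectorsUnion.1 u.2
    obtain ⟨h, hh⟩ := exists_Sinf_eqOn g α
    simp only [Submodule.coe_smul, RingHom.id_apply]
    rw [extendOnFixed_eq ((fixedSubmodule ρ α).smul_mem c hu) hh, extendOnFixed_eq hu hh,
      map_smul]
  norm_map' u := by
    obtain ⟨α, hu⟩ := mem_fixedVectorsUnion.1 u.2
    obtain ⟨h, hh⟩ := exists_Sinf_eqOn g α
    exact (congrArg norm (extendOnFixed_eq hu hh)).trans ((ρ h).norm_map u)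

theorem eq_of_forall_fixedVectorsS {X : Type*} [TopologicalSpace X] [T2Space X]
    (hd : Dense (⋃ α, fixedVectorsS ρ α)) {f₁ f₂ : V → X} (hf₁ : Continuous f₁)
    (hf₂ : Continuous f₂) (heq : ∀ α, ∀ v ∈ fixedVectorsS ρ α, f₁ v = f₂ v) : f₁ = f₂ :=
  hf₁.ext_on hd hf₂ fun v hv => let ⟨α, hα⟩ := mem_iUnion.1 hv; heq α v hα

variable [CompleteSpace V]

variable (ρ) in
noncomputable def extensionCLM (g : Equiv.Perm ℕ) : V →L[ℂ] V :=
  (extendOnFixedₗᵢ ρ g).toContinuousLinearMap.extend (fixedVectorsUnion ρ).subtypeL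

variable (hd : Dense (⋃ α, fixedVectorsS ρ α))
include hd

theorem extensionCLM_eq {g : Equiv.Perm ℕ} {α : ℕ} {v : V} (hv : v ∈ fixedVectorsS ρ α)
    {h : Sinf} (hh : ∀ i < α, (h : Equiv.Perm ℕ) i = g i) : extensionCLM ρ g v = ρ h v := by
  rw [← coe_fixedVectorsUnion] at hd
  exact (ContinuousLinearMap.extend_eq _ hd.denseRange_val
    isUniformEmbedding_subtype_val.isUniformInducing
    (⟨v, mem_fixedVectorsUnion.2 ⟨α, hv⟩⟩ : fixedVectorsUnion ρ)).trans (extendOnFixed_eq hv hh)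

theorem norm_extensionCLM_apply (g : Equiv.Perm ℕ) (v : V) : ‖extensionCLM ρ g v‖ = ‖v‖ :=
  congrFun (eq_of_forall_fixedVectorsS hd (f₁ := fun v => ‖extensionCLM ρ g v‖)
    (extensionCLM ρ g).continuous.norm continuous_norm
    fun α v hv => by
      obtain ⟨h, hh⟩ := exists_Sinf_eqOn g α
      rw [extensionCLM_eq hd hv hh, (ρ h).norm_map]) v

theorem extensionCLM_one : extensionCLM ρ 1 = ContinuousLinearMap.id ℂ V :=
  DFunLike.coe_injective <| eq_of_forall_fixedVectorsS hd (extensionCLM ρ 1).continuous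
    continuous_id fun α v hv => by
      rw [extensionCLM_eq hd hv (g := 1) (h := 1) fun i _ => rfl, map_one]; rfl

theorem extensionCLM_mul (g g' : Equiv.Perm ℕ) :
    extensionCLM ρ (g * g') = (extensionCLM ρ g).comp (extensionCLM ρ g') :=
  DFunLike.coe_injective <| eq_of_forall_fixedVectorsS hd (extensionCLM ρ _).continuous
    (ContinuousLinearMap.continuous _) fun α v hv => by
      obtain ⟨h', hh'⟩ := exists_Sinf_eqOn g' α
      obtain ⟨β, hβ⟩ := ((Finset.range α).image (h' : Equiv.Perm ℕ)).exists_nat_subset_range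
      have hβ' : ∀ i < α, (h' : Equiv.Perm ℕ) i < β := fun i hi =>
        Finset.mem_range.1 (hβ (Finset.mem_image_of_mem _ (Finset.mem_range.2 hi)))
      obtain ⟨h, hh⟩ := exists_Sinf_eqOn g β
      have hhh' : ∀ i < α, ((h * h' : Sinf) : Equiv.Perm ℕ) i = (g * g') i := fun i hi => by
        change (h : Equiv.Perm ℕ) ((h' : Equiv.Perm ℕ) i) = g (g' i)
        rw [hh _ (hβ' i hi), hh' i hi]
      rw [ContinuousLinearMap.coe_comp, Function.comp_apply, extensionCLM_eq hd hv hh',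
        extensionCLM_eq hd (apply_mem_fixedVectorsS hv hβ') hh, extensionCLM_eq hd hv hhh',
        map_mul, LinearIsometryEquiv.coe_mul, Function.comp_apply]

variable (ρ) in
noncomputable def extensionHom : Equiv.Perm ℕ →* (V →L[ℂ] V) where
  toFun := extensionCLM ρ
  map_one' := extensionCLM_one hd
  map_mul' := extensionCLM_mul hd

variable (ρ) in
noncomputable def extension : Equiv.Perm ℕ →* (V ≃ₗᵢ[ℂ] V) :=
  (extensionHom ρ hd).toLinearIsometryEquiv (norm_extensionCLM_apply hd)

theorem extension_coe (g : Sinf) : extension ρ hd g = ρ g :=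
  LinearIsometryEquiv.ext <| congrFun <| eq_of_forall_fixedVectorsS hd
    (extensionCLM ρ g).continuous (ρ g).continuous fun _ _ hv =>
      extensionCLM_eq hd hv fun _ _ => rfl

theorem extension_apply_eq_self {α : ℕ} {w : V} (hw : w ∈ fixedVectorsS ρ α) {h : Equiv.Perm ℕ}
    (hh : ∀ i < α, h i = i) : extension ρ hd h w = w :=
  (extensionCLM_eq hd hw (h := 1) fun i hi => (hh i hi).symm).trans (by rw [map_one]; rfl)

theorem isContinuousExtension_extension : IsContinuousExtension ρ (extension ρ hd) := by
  refine ⟨extension_coe hd, fun v ε hε => ?_⟩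
  obtain ⟨w, hvw, hw⟩ := Metric.dense_iff.1 hd v (ε / 2) (half_pos hε)
  obtain ⟨α, hα⟩ := mem_iUnion.1 hw
  refine ⟨α, fun h hh => ?_⟩
  rw [Metric.mem_ball, dist_comm, dist_eq_norm] at hvw
  calc ‖extension ρ hd h v - v‖ = ‖extension ρ hd h (v - w) - (v - w)‖ := by
        rw [map_sub, extension_apply_eq_self hd hα hh, sub_sub_sub_cancel_right]
    _ ≤ ‖extension ρ hd h (v - w)‖ + ‖v - w‖ := norm_sub_le _ _
    _ < ε := by rw [LinearIsometryEquiv.norm_map]; linarith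

end Extension

theorem IsContinuousExtension.dense_iUnion_fixedVectorsS {V : Type*} [NormedAddCommGroup V]
    [InnerProductSpace ℂ V] [CompleteSpace V] {ρ : Sinf →* (V ≃ₗᵢ[ℂ] V)}
    {ρb : Equiv.Perm ℕ →* (V ≃ₗᵢ[ℂ] V)} (hext : IsContinuousExtension ρ ρb) :
    Dense (⋃ α, fixedVectorsS ρ α) := by
  let : InnerProductSpace ℝ V := .rclikeToReal ℂ V
  refine Metric.dense_iff.2 fun v ε hε => ?_
  obtain ⟨α, hα⟩ := hext.2 v (ε / 2) (half_pos hε)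
  set K := closedConvexHull ℝ (range fun h : {h : Sinf // ∀ i < α, (h : Equiv.Perm ℕ) i = i} =>
    ρ h v)
  have hvK : v ∈ K := subset_closedConvexHull ⟨⟨1, fun _ _ => rfl⟩, by simp⟩
  have hKball : K ⊆ Metric.closedBall v (ε / 2) :=
    closedConvexHull_min (range_subset_iff.2 fun h => by
      rw [Metric.mem_closedBall, dist_eq_norm, ← hext.1]; exact (hα _ h.2).le)
      (convex_closedBall _ _) Metric.isClosed_closedBall
  have hKinv (k : Sinf) (hk : ∀ i < α, (k : Equiv.Perm ℕ) i = i) : MapsTo (ρ k) K K := by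
    refine mapsTo_closedConvexHull ((ρ k).toLinearMap.restrictScalars ℝ).isLinear
      (ρ k).continuous ?_
    rintro _ ⟨h, rfl⟩
    refine ⟨⟨k * h, fun i hi => ?_⟩, by simp [map_mul]⟩
    change (k : Equiv.Perm ℕ) ((h : Equiv.Perm ℕ) i) = i
    rw [h.2 i hi, hk i hi]
  -- the point of `K` of minimal norm is unique, hence fixed by every `ρ k` preserving `K`
  obtain ⟨m, hmK, hm⟩ :=
    convex_closedConvexHull.exists_mem_forall_norm_le_imp_eq ⟨v, hvK⟩ isClosed_closedConvexHull
  refine ⟨m, ?_, mem_iUnion.2 ⟨α, fun k hk => hm _ (hKinv k hk hmK) ((ρ k).norm_map m).le⟩⟩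
  rw [Metric.mem_ball]
  exact (Metric.mem_closedBall.1 (hKball hmK)).trans_lt (half_lt_self hε)

/-- A unitary representation `ρ` of `S_∞` on a complex Hilbert space `V`
admits a continuous extension to the full symmetric group `Perm(ℕ)` if and only if
`⋃_α V[α]` is dense in `V`. -/
theorem extension_iff_dense_union_of_fixedVectors
    {V : Type*} [NormedAddCommGroup V] [InnerProductSpace ℂ V] [CompleteSpace V]
    (ρ : ↥Sinf →* (V ≃ₗᵢ[ℂ] V)) :
    (∃ ρb : Equiv.Perm ℕ →* (V ≃ₗᵢ[ℂ] V), IsContinuousExtension ρ ρb) ↔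
      Dense (⋃ α : ℕ, fixedVectorsS ρ α) :=
  ⟨fun ⟨_, hext⟩ => hext.dense_iUnion_fixedVectorsS,
    fun hd => ⟨extension ρ hd, isContinuousExtension_extension hd⟩⟩
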